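/- arXiv:1912.07913 — 4 statements merged into one kernel-verified Lean document; each statement's English description precedes it below -/
import Mathlib

section
/- Let α = β₁ ∪ β₂ be a union of two disjoint subsets of variable indices. If a function g admits a decomposition with rank_{β₁}(g) = r₁ terms with respect to the split (β₁, β₁^c) and rank_{β₂}(g) = r₂ terms with respect to (β₂, β₂^c), then rank_α(g) ≤ r₁ · r₂. -/
lemma interp_points {X : Type*} [Nonempty X] :
    ∀ (r : ℕ) (u : Fin r → X → ℝ),
    ∃ (z : Fin r → X) (w : Fin r → X → ℝ), ∀ k x, u k x = ∑ j, u k (z j) * w j x := by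
  intro r
  induction r with
  | zero => exact fun u => ⟨Fin.elim0, Fin.elim0, fun k => k.elim0⟩
  | succ r ih =>
    intro u
    obtain ⟨z, w, hw⟩ := ih (fun j => u j.castSucc)
    set ρ : X → ℝ := fun x => u (Fin.last r) x - ∑ j, u (Fin.last r) (z j) * w j x with hρ
    by_cases hz : ∀ x, ρ x = 0
    · refine ⟨Fin.snoc z (Classical.arbitrary X), Fin.snoc w (fun _ => 0), ?_⟩
      intro k x
      rw [Fin.sum_univ_castSucc]
      simp only [Fin.snoc_castSucc, Fin.snoc_last, mul_zero, add_zero]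
      cases k using Fin.lastCases with
      | last =>
        have h := hz x
        rw [hρ] at h
        simpa [sub_eq_zero] using h
      | cast j => exact hw j x
    · push_neg at hz
      obtain ⟨x₀, hx₀⟩ := hz
      refine ⟨Fin.snoc z x₀,
        Fin.snoc (fun j x => w j x - w j x₀ * (ρ x / ρ x₀)) (fun x => ρ x / ρ x₀), ?_⟩
      intro k x
      rw [Fin.sum_univ_castSucc]
      simp only [Fin.snoc_castSucc, Fin.snoc_last]
      cases k using Fin.lastCases with
      | last =>
        have h1 : u (Fin.last r) x = ρ x + ∑ j, u (Fin.last r) (z j) * w j x := by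
          rw [hρ]; ring
        have h2 : u (Fin.last r) x₀ = ρ x₀ + ∑ j, u (Fin.last r) (z j) * w j x₀ := by
          rw [hρ]; ring
        rw [h1, h2]
        have : ∑ j, u (Fin.last r) (z j) * (w j x - w j x₀ * (ρ x / ρ x₀)) =
            (∑ j, u (Fin.last r) (z j) * w j x)
              - (∑ j, u (Fin.last r) (z j) * w j x₀) * (ρ x / ρ x₀) := by
          rw [Finset.sum_mul, ← Finset.sum_sub_distrib]
          exact Finset.sum_congr rfl fun j _ => by ring
        rw [this]
        field_simp
        ring
      | cast j =>
        have hx := hw j x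
        have hx0 := hw j x₀
        have : ∑ j', u j.castSucc (z j') * (w j' x - w j' x₀ * (ρ x / ρ x₀)) =
            (∑ j', u j.castSucc (z j') * w j' x)
              - (∑ j', u j.castSucc (z j') * w j' x₀) * (ρ x / ρ x₀) := by
          rw [Finset.sum_mul, ← Finset.sum_sub_distrib]
          exact Finset.sum_congr rfl fun j' _ => by ring
        rw [this, ← hx, ← hx0]
        ring

/-- If `α = β₁ ∪ β₂` with `β₁, β₂` disjoint, and `g` admits decompositions with
`r₁` separated terms w.r.t. `(β₁, β₁ᶜ)` and `r₂` terms w.r.t. `(β₂, β₂ᶜ)`,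
then `g` admits a decomposition with `r₁ * r₂` terms w.r.t. `(α, αᶜ)`. -/
theorem alpha_rank_union {d : ℕ} {E : Fin d → Type*}
    (g : ((i : Fin d) → E i) → ℝ)
    (β₁ β₂ : Set (Fin d)) (hdisj : Disjoint β₁ β₂) {r₁ r₂ : ℕ}
    (u₁ : Fin r₁ → ((i : ↥β₁) → E ↑i) → ℝ) (v₁ : Fin r₁ → ((i : ↥β₁ᶜ) → E ↑i) → ℝ)
    (u₂ : Fin r₂ → ((i : ↥β₂) → E ↑i) → ℝ) (v₂ : Fin r₂ → ((i : ↥β₂ᶜ) → E ↑i) → ℝ)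
    (h₁ : ∀ x, g x = ∑ k, u₁ k (β₁.restrict x) * v₁ k (β₁ᶜ.restrict x))
    (h₂ : ∀ x, g x = ∑ k, u₂ k (β₂.restrict x) * v₂ k (β₂ᶜ.restrict x)) :
    ∃ (a : Fin (r₁ * r₂) → ((i : ↥(β₁ ∪ β₂)) → E ↑i) → ℝ)
      (b : Fin (r₁ * r₂) → ((i : ↥(β₁ ∪ β₂)ᶜ) → E ↑i) → ℝ),
      ∀ x, g x = ∑ k, a k ((β₁ ∪ β₂).restrict x) * b k ((β₁ ∪ β₂)ᶜ.restrict x) := by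
  classical
  by_cases hne : Nonempty ((i : Fin d) → E i)
  swap
  · exact ⟨fun _ _ => 0, fun _ _ => 0, fun x => absurd ⟨x⟩ hne⟩
  have hX₁ : Nonempty ((i : ↥β₁) → E ↑i) := ⟨β₁.restrict (Classical.arbitrary _)⟩
  obtain ⟨z, w, hw⟩ := interp_points r₁ u₁
  -- splice: replace the β₁-coordinates of x with z j
  set sp : ((i : Fin d) → E i) → Fin r₁ → ((i : Fin d) → E i) :=
    fun x j i => if h : i ∈ β₁ then z j ⟨i, h⟩ else x i with hsp
  have hres1 : ∀ x j, β₁.restrict (sp x j) = z j := by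
    intro x j; funext i; exact dif_pos i.2
  have hres1c : ∀ x j, β₁ᶜ.restrict (sp x j) = β₁ᶜ.restrict x := by
    intro x j; funext i; exact dif_neg i.2
  have hres2 : ∀ x j, β₂.restrict (sp x j) = β₂.restrict x := by
    intro x j; funext i; exact dif_neg (Set.disjoint_right.mp hdisj i.2)
  -- key identity
  have key : ∀ x, g x = ∑ j, w j (β₁.restrict x) *
      ∑ l, u₂ l (β₂.restrict x) * v₂ l (β₂ᶜ.restrict (sp x j)) := by
    intro x
    have step1 : g x = ∑ j, w j (β₁.restrict x) * g (sp x j) := by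
      rw [h₁ x]
      have : ∀ k, u₁ k (β₁.restrict x) * v₁ k (β₁ᶜ.restrict x) =
          ∑ j, w j (β₁.restrict x) * (u₁ k (z j) * v₁ k (β₁ᶜ.restrict x)) := by
        intro k
        rw [hw k (β₁.restrict x), Finset.sum_mul]
        exact Finset.sum_congr rfl fun j _ => by ring
      rw [Finset.sum_congr rfl fun k _ => this k, Finset.sum_comm]
      refine Finset.sum_congr rfl fun j _ => ?_
      rw [← Finset.mul_sum, h₁ (sp x j), hres1, hres1c]
    rw [step1]
    refine Finset.sum_congr rfl fun j _ => ?_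
    rw [h₂ (sp x j), hres2]
  -- build a and b
  set e : Fin (r₁ * r₂) ≃ Fin r₁ × Fin r₂ := finProdFinEquiv.symm with he
  refine ⟨fun k xα => w (e k).1 (fun i => xα ⟨↑i, Set.mem_union_left β₂ i.2⟩) *
      u₂ (e k).2 (fun i => xα ⟨↑i, Set.mem_union_right β₁ i.2⟩),
    fun k xc => v₂ (e k).2 (fun i =>
      if h : ↑i ∈ β₁ then z (e k).1 ⟨↑i, h⟩
      else xc ⟨↑i, fun hm => hm.elim h i.2⟩), ?_⟩
  intro x
  rw [key x]
  rw [← Equiv.sum_comp e.symm]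
  rw [Fintype.sum_prod_type]
  refine Finset.sum_congr rfl fun j _ => ?_
  rw [Finset.mul_sum]
  refine Finset.sum_congr rfl fun l _ => ?_
  simp only [Equiv.apply_symm_apply]
  have hb : v₂ l (β₂ᶜ.restrict (sp x j)) = v₂ l (fun i =>
      if h : ↑i ∈ β₁ then z j ⟨↑i, h⟩
      else ((β₁ ∪ β₂)ᶜ.restrict x) ⟨↑i, fun hm => hm.elim h i.2⟩) := rfl
  have ha1 : (fun i : ↥β₁ => ((β₁ ∪ β₂).restrict x) ⟨↑i, Set.mem_union_left β₂ i.2⟩)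
      = β₁.restrict x := rfl
  have ha2 : (fun i : ↥β₂ => ((β₁ ∪ β₂).restrict x) ⟨↑i, Set.mem_union_right β₁ i.2⟩)
      = β₂.restrict x := rfl
  rw [hb, ha1, ha2]
  ring
end

section
/- Let f(x) = f_1(x₁) ∏_{ν=2}^d f_{ν|ν-1}(x_ν | x_{ν-1}) be the density of a Markov process, and for 1 < ν < d let m_{ν+1} = rank of the bivariate function (t,s) ↦ f_{ν+1|ν}(t|s). Then rank_{{1,…,ν}}(f) ≤ m_{ν+1}: f admits a decomposition into m_{ν+1} terms separating the variables (x₁,…,x_ν) from (x_{ν+1},…,x_d). -/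
/-! Cutting the chain at the transition `ν → ν + 1` writes `f` as a factor in `x₁, …, x_ν`, times
`f_{ν+1|ν}(x_{ν+1} | x_ν)`, times a factor in `x_{ν+1}, …, x_d`. Substituting the `m`-term
decomposition of the middle factor gives `m` terms separating the two groups of variables. -/

open Finset Function

theorem Finset.prod_Icc_eq_mul_mul_prod_Icc {M : Type*} [CommMonoid M] (g : ℕ → M)
    {a ν d : ℕ} (ha : a ≤ ν + 1) (hνd : ν < d) :
    ∏ i ∈ Icc a d, g i = (∏ i ∈ Icc a ν, g i) * g (ν + 1) * ∏ i ∈ Icc (ν + 2) d, g i := by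
  simp only [← Ico_add_one_right_eq_Icc]
  rw [← prod_Ico_consecutive g (by lia : a ≤ ν + 2) (by lia : ν + 2 ≤ d + 1),
    prod_Ico_succ_top ha]

theorem Finset.prod_Icc_transition_congr {E M : Type*} [CommMonoid M] (trans : ℕ → E → E → M)
    {a b : ℕ} {x y : ℕ → E} (hxy : ∀ i, a - 1 ≤ i → i ≤ b → x i = y i) :
    ∏ i ∈ Icc a b, trans i (x i) (x (i - 1)) = ∏ i ∈ Icc a b, trans i (y i) (y (i - 1)) :=
  prod_congr rfl fun i hi => by
    rw [mem_Icc] at hi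
    rw [hxy i (by lia) hi.2, hxy (i - 1) (by lia) (by lia)]

theorem Function.factorsThrough_subtype_restrict {ι E γ : Type*} {P : ι → Prop}
    {g : (ι → E) → γ} (hg : ∀ x y, (∀ i, P i → x i = y i) → g x = g y) :
    g.FactorsThrough fun x (i : {i // P i}) => x i :=
  fun x y hxy => hg x y fun i hi => congrFun hxy ⟨i, hi⟩

theorem exists_sum_mul_comp_of_factorsThrough {X Y Z R : Type*} [AddCommMonoid R] [Mul R]
    {m : ℕ} (p : X → Y) (q : X → Z) (α β : Fin m → X → R)
    (hα : ∀ k, (α k).FactorsThrough p) (hβ : ∀ k, (β k).FactorsThrough q) :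
    ∃ (a : Fin m → Y → R) (b : Fin m → Z → R),
      ∀ x, ∑ k, α k x * β k x = ∑ k, a k (p x) * b k (q x) :=
  ⟨fun k => extend p (α k) 0, fun k => extend q (β k) 0, fun x => by
    simp only [(hα _).extend_apply, (hβ _).extend_apply]⟩

/-- For a Markov density `f(x) = f₁(x₁) ∏_{ν=2}^d f_{ν|ν-1}(x_ν|x_{ν-1})`,
and `1 < ν < d`, if the bivariate transition function `f_{ν+1|ν}` has rank
`m_{ν+1}`, then `f` admits a decomposition into `m_{ν+1}` terms separating
the variables `(x₁,…,x_ν)` from `(x_{ν+1},…,x_d)`: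
`rank_{{1,…,ν}}(f) ≤ m_{ν+1}`. -/
theorem markov_rank_interval {E : Type*} (d : ℕ) (f : (ℕ → E) → ℝ)
    (f₁ : E → ℝ) (trans : ℕ → E → E → ℝ)
    (hf : ∀ x, f x = f₁ (x 1) * ∏ i ∈ Finset.Icc 2 d, trans i (x i) (x (i - 1)))
    (ν : ℕ) (hν1 : 1 < ν) (hνd : ν < d)
    {m : ℕ} (u : Fin m → E → ℝ) (v : Fin m → E → ℝ)
    (htr : ∀ t s, trans (ν + 1) t s = ∑ k, u k t * v k s) :
    ∃ (a : Fin m → ({i : ℕ // i ≤ ν} → E) → ℝ)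
      (b : Fin m → ({i : ℕ // ν < i} → E) → ℝ),
      ∀ x, f x = ∑ k, a k (fun i => x i.1) * b k (fun i => x i.1) := by
  let past (x : ℕ → E) : ℝ := f₁ (x 1) * ∏ i ∈ Icc 2 ν, trans i (x i) (x (i - 1))
  let future (x : ℕ → E) : ℝ := ∏ i ∈ Icc (ν + 2) d, trans i (x i) (x (i - 1))
  have hf_split : ∀ x, f x = ∑ k, past x * v k (x ν) * (u k (x (ν + 1)) * future x) := by
    intro x
    rw [hf, prod_Icc_eq_mul_mul_prod_Icc _ (by lia) hνd, Nat.add_sub_cancel, htr]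
    simp only [mul_sum, sum_mul]
    exact sum_congr rfl fun k _ => by ring
  obtain ⟨a, b, hab⟩ := exists_sum_mul_comp_of_factorsThrough (fun x (i : {i // i ≤ ν}) => x i)
    (fun x (i : {i // ν < i}) => x i) (fun k x => past x * v k (x ν))
    (fun k x => u k (x (ν + 1)) * future x)
    (fun k => factorsThrough_subtype_restrict fun x y hxy => by
      simp only [past, prod_Icc_transition_congr trans (a := 2) fun i _ hi => hxy i hi,
        hxy 1 hν1.le, hxy ν le_rfl])
    (fun k => factorsThrough_subtype_restrict fun x y hxy => by
      simp only [future, hxy (ν + 1) (by lia),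
        prod_Icc_transition_congr trans (a := ν + 2) fun i hi _ => hxy i (by lia)])
  exact ⟨a, b, fun x => (hf_split x).trans (hab x)⟩
end

section
/- Let f(x) = f_1(x₁) ∏_{ν=2}^d f_{ν|ν-1}(x_ν | x_{ν-1}) be a Markov density with m_ν the rank of the bivariate function f_{ν|ν-1}. Then for 2 ≤ ν ≤ d-1, rank_{{ν}}(f) ≤ m_ν m_{ν+1}, and rank_{{1}}(f) ≤ m₂, rank_{{d}}(f) ≤ m_d. -/
/-!
Each transition factor `f_{ν|ν-1}(x_ν | x_{ν-1})` is a sum of `m_ν` products of a function of `x_ν`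
and a function of `x_{ν-1}`. The coordinate `x_ν` enters the Markov density only through the two
factors `f_{ν|ν-1}` and `f_{ν+1|ν}` (and through `f₁` when `ν = 1`); multiplying out their two
separated expansions gives `m_ν m_{ν+1}` separated terms, and every other factor is absorbed into
the part that does not depend on `x_ν`. At the ends of the chain only one transition factor
involves `x_ν`.
-/

open Finset Function

section SeparationRank

variable {E : Type*} {ν r s : ℕ} {F G : (ℕ → E) → ℝ}

def SeparationRankLE (ν r : ℕ) (F : (ℕ → E) → ℝ) : Prop :=
  ∃ (a : Fin r → E → ℝ) (b : Fin r → ({i : ℕ // i ≠ ν} → E) → ℝ),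
    ∀ x, F x = ∑ k, a k (x ν) * b k (fun i => x i.1)

/-- The value `x (ν + 1)` serves as a filler for the forgotten coordinate, so no element of `E`
has to be chosen. -/
theorem exists_eq_comp_restrict_of_update_eq (hG : ∀ x e, G (update x ν e) = G x) :
    ∃ g : ({i : ℕ // i ≠ ν} → E) → ℝ, ∀ x, G x = g (fun i => x i.1) := by
  refine ⟨fun y => G fun i => if h : i = ν then y ⟨ν + 1, by omega⟩ else y ⟨i, h⟩, fun x => ?_⟩
  rw [← hG x (x (ν + 1))]
  congr 1
  funext i
  by_cases h : i = ν <;> simp [h]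

namespace SeparationRankLE

theorem of_sum_mul {j : ℕ} (hj : j ≠ ν) (p q : Fin r → E → ℝ)
    (hF : ∀ x, F x = ∑ k, p k (x ν) * q k (x j)) : SeparationRankLE ν r F :=
  ⟨p, fun k y => q k (y ⟨j, hj⟩), hF⟩

theorem of_sum_mul' {j : ℕ} (hj : j ≠ ν) (p q : Fin r → E → ℝ)
    (hF : ∀ x, F x = ∑ k, q k (x j) * p k (x ν)) : SeparationRankLE ν r F :=
  of_sum_mul hj p q fun x => by simp only [hF, mul_comm]

theorem mul (hF : SeparationRankLE ν r F) (hG : SeparationRankLE ν s G) :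
    SeparationRankLE ν (r * s) (fun x => F x * G x) := by
  obtain ⟨a, b, hab⟩ := hF
  obtain ⟨a', b', hab'⟩ := hG
  refine ⟨fun k e => a (finProdFinEquiv.symm k).1 e * a' (finProdFinEquiv.symm k).2 e,
    fun k y => b (finProdFinEquiv.symm k).1 y * b' (finProdFinEquiv.symm k).2 y, fun x => ?_⟩
  dsimp only
  rw [hab, hab', Fintype.sum_mul_sum, ← Fintype.sum_prod_type',
    ← finProdFinEquiv.symm.sum_comp]
  exact sum_congr rfl fun k _ => by ring

theorem coord_mul (g : E → ℝ) (hF : SeparationRankLE ν r F) :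
    SeparationRankLE ν r (fun x => g (x ν) * F x) := by
  obtain ⟨a, b, hab⟩ := hF
  exact ⟨fun k e => g e * a k e, b, fun x => by simp only [hab, mul_sum, mul_assoc]⟩

theorem mul_of_update_eq (hF : SeparationRankLE ν r F) (hG : ∀ x e, G (update x ν e) = G x) :
    SeparationRankLE ν r (fun x => F x * G x) := by
  obtain ⟨a, b, hab⟩ := hF
  obtain ⟨g, hg⟩ := exists_eq_comp_restrict_of_update_eq hG
  exact ⟨a, fun k y => b k y * g y, fun x => by simp only [hab, hg x, sum_mul, mul_assoc]⟩

end SeparationRankLE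

section Markov

variable {d : ℕ} {f₁ : E → ℝ} {trans : ℕ → E → E → ℝ} {m : ℕ → ℕ}
  {u v : (i : ℕ) → Fin (m i) → E → ℝ}

def markovDensity (d : ℕ) (f₁ : E → ℝ) (trans : ℕ → E → E → ℝ) (x : ℕ → E) : ℝ :=
  f₁ (x 1) * ∏ i ∈ Icc 2 d, trans i (x i) (x (i - 1))

theorem prod_trans_update_eq {t : Finset ℕ} (ht : ∀ i ∈ t, i ≠ ν ∧ i - 1 ≠ ν)
    (x : ℕ → E) (e : E) :
    ∏ i ∈ t, trans i (update x ν e i) (update x ν e (i - 1)) =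
      ∏ i ∈ t, trans i (x i) (x (i - 1)) :=
  prod_congr rfl fun i hi => by rw [update_of_ne (ht i hi).1, update_of_ne (ht i hi).2]

theorem initial_mul_prod_trans_update_eq {t : Finset ℕ} (hν : ν ≠ 1)
    (ht : ∀ i ∈ t, i ≠ ν ∧ i - 1 ≠ ν) (x : ℕ → E) (e : E) :
    f₁ (update x ν e 1) * ∏ i ∈ t, trans i (update x ν e i) (update x ν e (i - 1)) =
      f₁ (x 1) * ∏ i ∈ t, trans i (x i) (x (i - 1)) := by
  rw [update_of_ne hν.symm, prod_trans_update_eq ht]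

variable (htr : ∀ i ∈ Icc 2 d, ∀ t s, trans i t s = ∑ k, u i k t * v i k s)
include htr

theorem separationRankLE_trans_of_mem (hν : ν ∈ Icc 2 d) :
    SeparationRankLE ν (m ν) (fun x => trans ν (x ν) (x (ν - 1))) :=
  .of_sum_mul (by simp only [mem_Icc] at hν; omega) (u ν) (v ν) fun x => htr ν hν _ _

theorem separationRankLE_trans_succ_of_mem (hν : ν + 1 ∈ Icc 2 d) :
    SeparationRankLE ν (m (ν + 1)) (fun x => trans (ν + 1) (x (ν + 1)) (x ν)) :=
  .of_sum_mul' (by omega) (v (ν + 1)) (u (ν + 1)) fun x => htr (ν + 1) hν _ _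

theorem separationRankLE_markovDensity_of_interior (h2 : 2 ≤ ν) (hνd : ν ≤ d - 1) :
    SeparationRankLE ν (m ν * m (ν + 1)) (markovDensity d f₁ trans) := by
  have hν : ν ∈ Icc 2 d := by simp only [mem_Icc]; omega
  have hν1 : ν + 1 ∈ (Icc 2 d).erase ν := by simp only [mem_erase, mem_Icc]; omega
  have hsplit : markovDensity d f₁ trans = fun x =>
      trans ν (x ν) (x (ν - 1)) * trans (ν + 1) (x (ν + 1)) (x ν) *
        (f₁ (x 1) * ∏ i ∈ ((Icc 2 d).erase ν).erase (ν + 1), trans i (x i) (x (i - 1))) := by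
    funext x
    rw [markovDensity, ← mul_prod_erase _ _ hν, ← mul_prod_erase _ _ hν1, Nat.add_sub_cancel]
    ring
  rw [hsplit]
  refine ((separationRankLE_trans_of_mem htr hν).mul
    (separationRankLE_trans_succ_of_mem htr (mem_of_mem_erase hν1))).mul_of_update_eq
    fun x e => initial_mul_prod_trans_update_eq (by omega) (fun i hi => ?_) x e
  simp only [mem_erase, mem_Icc] at hi
  omega

theorem separationRankLE_markovDensity_one (hd : 2 ≤ d) :
    SeparationRankLE 1 (m 2) (markovDensity d f₁ trans) := by
  have h2 : 2 ∈ Icc 2 d := by simp only [mem_Icc]; omega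
  have hsplit : markovDensity d f₁ trans = fun x =>
      f₁ (x 1) * trans 2 (x 2) (x 1) *
        ∏ i ∈ (Icc 2 d).erase 2, trans i (x i) (x (i - 1)) := by
    funext x
    rw [markovDensity, ← mul_prod_erase _ _ h2, mul_assoc]
  rw [hsplit]
  refine ((separationRankLE_trans_succ_of_mem htr h2).coord_mul f₁).mul_of_update_eq
    fun x e => prod_trans_update_eq (fun i hi => ?_) x e
  simp only [mem_erase, mem_Icc] at hi
  omega

theorem separationRankLE_markovDensity_last (hd : 2 ≤ d) :
    SeparationRankLE d (m d) (markovDensity d f₁ trans) := by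
  have hdd : d ∈ Icc 2 d := by simp only [mem_Icc]; omega
  have hsplit : markovDensity d f₁ trans = fun x =>
      trans d (x d) (x (d - 1)) *
        (f₁ (x 1) * ∏ i ∈ (Icc 2 d).erase d, trans i (x i) (x (i - 1))) := by
    funext x
    rw [markovDensity, ← mul_prod_erase _ _ hdd]
    ring
  rw [hsplit]
  refine (separationRankLE_trans_of_mem htr hdd).mul_of_update_eq
    fun x e => initial_mul_prod_trans_update_eq (by omega) (fun i hi => ?_) x e
  simp only [mem_erase, mem_Icc] at hi
  omega

end Markov

end SeparationRank

/-- For a Markov density `f(x) = f₁(x₁) ∏_{ν=2}^d f_{ν|ν-1}(x_ν|x_{ν-1})`, with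
`m_ν` the rank of the bivariate function `f_{ν|ν-1}`: for `2 ≤ ν ≤ d-1`,
`rank_{{ν}}(f) ≤ m_ν m_{ν+1}`; moreover `rank_{{1}}(f) ≤ m₂` and
`rank_{{d}}(f) ≤ m_d`. -/
theorem markov_rank_singleton {E : Type*} (d : ℕ) (hd : 2 ≤ d)
    (f : (ℕ → E) → ℝ)
    (f₁ : E → ℝ) (trans : ℕ → E → E → ℝ)
    (hf : ∀ x, f x = f₁ (x 1) * ∏ i ∈ Finset.Icc 2 d, trans i (x i) (x (i - 1)))
    (m : ℕ → ℕ)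
    (u : (i : ℕ) → Fin (m i) → E → ℝ) (v : (i : ℕ) → Fin (m i) → E → ℝ)
    (htr : ∀ i ∈ Finset.Icc 2 d, ∀ t s, trans i t s = ∑ k, u i k t * v i k s) :
    (∀ ν, 2 ≤ ν → ν ≤ d - 1 →
      ∃ (a : Fin (m ν * m (ν + 1)) → E → ℝ)
        (b : Fin (m ν * m (ν + 1)) → ({i : ℕ // i ≠ ν} → E) → ℝ),
        ∀ x, f x = ∑ k, a k (x ν) * b k (fun i => x i.1)) ∧
    (∃ (a : Fin (m 2) → E → ℝ) (b : Fin (m 2) → ({i : ℕ // i ≠ 1} → E) → ℝ),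
        ∀ x, f x = ∑ k, a k (x 1) * b k (fun i => x i.1)) ∧
    (∃ (a : Fin (m d) → E → ℝ) (b : Fin (m d) → ({i : ℕ // i ≠ d} → E) → ℝ),
        ∀ x, f x = ∑ k, a k (x d) * b k (fun i => x i.1)) := by
  obtain rfl : f = markovDensity d f₁ trans := funext hf
  exact ⟨fun ν h2 hνd => separationRankLE_markovDensity_of_interior htr h2 hνd,
    separationRankLE_markovDensity_one htr hd, separationRankLE_markovDensity_last htr hd⟩
end

section
/- Under the same setup as the leave-one-out identity, the leave-one-out risk equals (1/(n(n−1))) Σ_{j ∈ 𝒥} [ Σ_{i=1}^n Ψ_j(x_i)² − (n/(n−1)) Σ_{i ≠ k} Ψ_j(x_i) Ψ_j(x_k) ]. -/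
/-!
Write `S = Σ_i f i` and `Q = Σ_i f i²` for a single coordinate `f = Ψ_j`. Since
`Σ_{k ≠ i} f k = S − f i`, both `Σ_i (Σ_{k ≠ i} f k)²` and `Σ_i (Σ_{k ≠ i} f k) f i` are
combinations of `S²` and `Q`, and so is the off-diagonal sum `Σ_{i ≠ k} f i f k = S² − Q`.
After exchanging the sums over samples and coordinates, the identity becomes a polynomial
identity in `S`, `Q` and `c = (n − 1)⁻¹` which needs nothing about `c` beyond `c (n − 1) c = c`.
-/

open Finset

namespace Finset

variable {ι R : Type*} [Fintype ι] [DecidableEq ι] [CommRing R]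

theorem sum_sum_erase_mul (f : ι → R) :
    ∑ i, ∑ k ∈ univ.erase i, f i * f k = (∑ i, f i) ^ 2 - ∑ i, f i ^ 2 := by
  simp only [← mul_sum, sum_erase_eq_sub (mem_univ _), sum_sub_distrib, ← sum_mul, sq]

theorem sum_sum_erase_sq (f : ι → R) :
    ∑ i, (∑ k ∈ univ.erase i, f k) ^ 2
      = ((Fintype.card ι : R) - 2) * (∑ i, f i) ^ 2 + ∑ i, f i ^ 2 := by
  simp only [sum_erase_eq_sub (mem_univ _), sub_sq, sum_add_distrib, sum_sub_distrib, sum_const,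
    card_univ, nsmul_eq_mul, ← mul_sum]
  ring

end Finset

theorem inv_mul_mul_inv_self {K : Type*} [DivisionRing K] (m : K) : m⁻¹ * m * m⁻¹ = m⁻¹ := by
  simpa using mul_inv_mul_cancel m⁻¹

section LeaveOneOut

variable {ι K : Type*} [Fintype ι] [DecidableEq ι] [Field K]

/-- The paper's `C^{-i}_j` for the coordinate `f = Ψ_j`. -/
def looMean (f : ι → K) (i : ι) : K :=
  ((Fintype.card ι : K) - 1)⁻¹ * ∑ k ∈ univ.erase i, f k

theorem sum_looMean_sq_sub_two_mul (f : ι → K) :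
    ∑ i, (looMean f i ^ 2 - 2 * (looMean f i * f i))
      = ((Fintype.card ι : K) - 1)⁻¹ * (∑ i, f i ^ 2
          - (Fintype.card ι : K) * ((Fintype.card ι : K) - 1)⁻¹
            * ∑ i, ∑ k ∈ univ.erase i, f i * f k) := by
  set m : K := (Fintype.card ι : K) - 1
  have hcross : ∑ i, (∑ k ∈ univ.erase i, f k) * f i = (∑ i, f i) ^ 2 - ∑ i, f i ^ 2 := by
    rw [← sum_sum_erase_mul]
    exact sum_congr rfl fun i _ => by rw [sum_mul]; simp only [mul_comm]
  have hsplit : ∑ i, (looMean f i ^ 2 - 2 * (looMean f i * f i))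
      = m⁻¹ ^ 2 * ∑ i, (∑ k ∈ univ.erase i, f k) ^ 2
        - 2 * m⁻¹ * ∑ i, (∑ k ∈ univ.erase i, f k) * f i := by
    rw [sum_sub_distrib, mul_sum, mul_sum]
    congr 1 <;> exact sum_congr rfl fun i _ => by rw [looMean]; ring
  rw [hsplit, sum_sum_erase_sq, hcross, sum_sum_erase_mul]
  linear_combination (2 * (∑ i, f i) ^ 2 - ∑ i, f i ^ 2) * inv_mul_mul_inv_self m

end LeaveOneOut

theorem loo_risk_second_expression_general {J : Type*} [Fintype J]
    (n : ℕ) (P : J → Fin n → ℝ)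
    (Cm : Fin n → J → ℝ)
    (hCm : ∀ i j, Cm i j = (1 / ((n : ℝ) - 1)) * ∑ k ∈ Finset.univ.erase i, P j k) :
    (1 / (n : ℝ)) * ∑ i, ((∑ j, (Cm i j) ^ 2) - 2 * ∑ j, Cm i j * P j i)
      = (1 / ((n : ℝ) * ((n : ℝ) - 1)))
        * ∑ j, ((∑ i, (P j i) ^ 2)
            - ((n : ℝ) / ((n : ℝ) - 1))
              * ∑ i, ∑ k ∈ Finset.univ.erase i, P j i * P j k) := by
  have hC : ∀ i j, Cm i j = looMean (P j) i := fun i j => by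
    rw [hCm, looMean, Fintype.card_fin, one_div]
  have hswap : ∑ i, ((∑ j, (Cm i j) ^ 2) - 2 * ∑ j, Cm i j * P j i)
      = ∑ j, ∑ i, (looMean (P j) i ^ 2 - 2 * (looMean (P j) i * P j i)) := by
    rw [sum_comm]
    simp only [hC, mul_sum, sum_sub_distrib]
  have hcoord := fun j => sum_looMean_sq_sub_two_mul (P j)
  simp only [Fintype.card_fin, ← one_div, ← div_eq_mul_one_div] at hcoord
  simp only [hswap, hcoord]
  rw [← mul_sum, ← mul_assoc, one_div_mul_one_div]

/-- Leave-one-out risk identity (second expression): with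
`C^{-i}_j = (1/(n−1)) Σ_{k≠i} Ψ_j(x_k)`,
`R^loo = (1/(n(n−1))) Σ_j [ Σ_i Ψ_j(x_i)² − (n/(n−1)) Σ_{i≠k} Ψ_j(x_i)Ψ_j(x_k) ]`. -/
theorem loo_risk_second_expression {J : Type*} [Fintype J]
    (n : ℕ) (hn : 2 ≤ n) (P : J → Fin n → ℝ)
    (Cm : Fin n → J → ℝ)
    (hCm : ∀ i j, Cm i j = (1 / ((n : ℝ) - 1)) * ∑ k ∈ Finset.univ.erase i, P j k) :
    (1 / (n : ℝ)) * ∑ i, ((∑ j, (Cm i j) ^ 2) - 2 * ∑ j, Cm i j * P j i)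
      = (1 / ((n : ℝ) * ((n : ℝ) - 1)))
        * ∑ j, ((∑ i, (P j i) ^ 2)
            - ((n : ℝ) / ((n : ℝ) - 1))
              * ∑ i, ∑ k ∈ Finset.univ.erase i, P j i * P j k) :=
  loo_risk_second_expression_general n P Cm hCm
end
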